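/- arXiv:2004.07918 — 3 statements merged into one kernel-verified Lean document; each statement's English description precedes it below -/
import Mathlib

section
/- In a (d,k,r,x)-squid H, any k-power dominating set must contain at least one vertex from each spine; hence γ_p^k(H) ≥ d. -/
/-- A hypergraph on vertex type `V`, given by its finite set of (finite) edges. -/
structure Hypergraph' (V : Type*) where
  edges : Finset (Finset V)

namespace Hypergraph'

variable {V : Type*}

/-- Two vertices are adjacent iff they are distinct and share an edge. -/
def Adj (H : Hypergraph' V) (u v : V) : Prop :=
  u ≠ v ∧ ∃ e ∈ H.edges, u ∈ e ∧ v ∈ e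

/-- The underlying adjacency (simple) graph of a hypergraph. -/
def graph (H : Hypergraph' V) : SimpleGraph V where
  Adj := H.Adj
  symm := by
    refine ⟨?_⟩
    rintro u v ⟨hne, e, he, hu, hv⟩
    exact ⟨hne.symm, e, he, hv, hu⟩
  loopless := by
    refine ⟨?_⟩
    rintro u ⟨hne, -⟩
    exact hne rfl

/-- Closed neighborhood of a set of vertices. -/
def closedNbhd (H : Hypergraph' V) (S : Set V) : Set V :=
  S ∪ {u | ∃ v ∈ S, H.Adj v u}

/-- `F` is a set of edges through `v` covering all neighbors of `v` outside `S`. -/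
def Covers (H : Hypergraph' V) (v : V) (S : Set V) (F : Finset (Finset V)) : Prop :=
  F ⊆ H.edges ∧ (∀ e ∈ F, v ∈ e) ∧ ∀ u, H.Adj v u → u ∉ S → ∃ e ∈ F, u ∈ e

/-- The white degree of `v` with respect to the blue set `S`: the minimum number of
edges containing `v` that cover all neighbors of `v` outside `S`. -/
noncomputable def wdeg (H : Hypergraph' V) (v : V) (S : Set V) : ℕ :=
  sInf {t | ∃ F, H.Covers v S F ∧ F.card ≤ t}

/-- One step of the `k`-forcing propagation: every blue vertex whose white
neighbors can be covered by at most `k` incident edges forces its neighbors blue. -/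
def step (H : Hypergraph' V) (k : ℕ) (S : Set V) : Set V :=
  S ∪ {u | ∃ v ∈ S, H.Adj v u ∧ H.wdeg v S ≤ k}

/-- `D` is a `k`-power dominating set if iterating the propagation from `N[D]`
colors every vertex blue. -/
def IsPDS (H : Hypergraph' V) (k : ℕ) (D : Set V) : Prop :=
  ∃ t : ℕ, (H.step k)^[t] (H.closedNbhd D) = Set.univ

/-- The `k`-power domination number. -/
noncomputable def pdn (H : Hypergraph' V) (k : ℕ) : ℕ :=
  sInf {t | ∃ D : Finset V, H.IsPDS k ↑D ∧ D.card ≤ t}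

/-- A dominating set. -/
def Dominating (H : Hypergraph' V) (S : Set V) : Prop :=
  H.closedNbhd S = Set.univ

/-- The domination number. -/
noncomputable def gamma (H : Hypergraph' V) : ℕ :=
  sInf {t | ∃ D : Finset V, H.Dominating ↑D ∧ D.card ≤ t}

/-- An `r`-uniform hypergraph. -/
def Uniform (H : Hypergraph' V) (r : ℕ) : Prop :=
  ∀ e ∈ H.edges, e.card = r

/-- Connectivity of the underlying adjacency graph. -/
def Connected (H : Hypergraph' V) : Prop := H.graph.Connected

/-- No isolated vertices: every vertex lies in some edge. -/
def NoIsolated (H : Hypergraph' V) : Prop :=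
  ∀ v : V, ∃ e ∈ H.edges, v ∈ e

/-- External private neighbors of `v` with respect to `D`. -/
def epn (H : Hypergraph' V) (v : V) (D : Set V) : Set V :=
  {u | u ∉ D ∧ H.Adj v u ∧ ∀ w ∈ D, w ≠ v → ¬ H.Adj w u}

/-- Number of connected components of the subhypergraph induced on `D`
(with respect to adjacency within `D`). -/
noncomputable def numComponents (H : Hypergraph' V) (D : Set V) : ℕ :=
  Nat.card (SimpleGraph.ConnectedComponent (SimpleGraph.induce D H.graph))

end Hypergraph'

/-- A `(d,k,r,x)`-squid structure on a hypergraph `H`: `d` spines, the `i`-th spine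
having `r - x i` strong and `k + x i` weak vertices, with `k+1` in-spine edges each
containing all the strong vertices of the spine, together covering the spine's weak
vertices, no proper subfamily covering them; every edge containing a weak vertex is
one of its spine's edges, `H` is `r`-uniform and connected. -/
structure Squid {V : Type*} [Fintype V] [DecidableEq V] (H : Hypergraph' V)
    (d k r : ℕ) (x : Fin d → ℕ) where
  strong : Fin d → Finset V
  weak : Fin d → Finset V
  spineEdges : Fin d → Finset (Finset V)
  x_pos : ∀ i, 1 ≤ x i
  x_le : ∀ i, x i ≤ r - 1
  strong_card : ∀ i, (strong i).card = r - x i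
  weak_card : ∀ i, (weak i).card = k + x i
  strong_weak_disj : ∀ i, Disjoint (strong i) (weak i)
  spine_disj : ∀ i j, i ≠ j → Disjoint (strong i ∪ weak i) (strong j ∪ weak j)
  vertex_partition :
    (Finset.univ : Finset V) = Finset.univ.biUnion (fun i => strong i ∪ weak i)
  spineEdges_sub : ∀ i, spineEdges i ⊆ H.edges
  spineEdges_card : ∀ i, (spineEdges i).card = k + 1
  spineEdges_strong : ∀ i, ∀ e ∈ spineEdges i, strong i ⊆ e ∧ e ⊆ strong i ∪ weak i
  spineEdges_cover : ∀ i, weak i ⊆ (spineEdges i).biUnion id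
  no_proper_cover : ∀ i, ∀ F ⊂ spineEdges i, ¬ weak i ⊆ F.biUnion id
  weak_edge_in_spine : ∀ e ∈ H.edges, ∀ i, (∃ w ∈ weak i, w ∈ e) → e ∈ spineEdges i
  uniform : H.Uniform r
  connected : H.Connected

/-!
If a set `D` misses the `i`-th spine, no weak vertex of that spine is in `N[D]`, since the only
neighbours of a weak vertex lie in its own spine. A weak vertex can then only be forced by a strong
vertex of the same spine, and this never happens: any family of edges covering the white weak
vertices contains, by minimality of the spine edges, all `k + 1` of them. So the weak vertices
stay white forever. Distinct spines are disjoint, hence every `k`-power dominating set has at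
least `d` vertices.
-/

namespace Hypergraph'

variable {V : Type*} (H : Hypergraph' V)

theorem exists_covers_card_le_of_wdeg_le {v : V} {S : Set V} {k : ℕ} (h : H.wdeg v S ≤ k) :
    ∃ F, H.Covers v S F ∧ F.card ≤ k := by
  classical
  have hne : {t | ∃ F, H.Covers v S F ∧ F.card ≤ t}.Nonempty := by
    refine ⟨_, H.edges.filter (v ∈ ·), ⟨Finset.filter_subset _ _,
      fun e he => (Finset.mem_filter.mp he).2, ?_⟩, le_rfl⟩
    rintro u ⟨-, e, he, hv, hu⟩ -
    exact ⟨e, Finset.mem_filter.mpr ⟨he, hv⟩, hu⟩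
  obtain ⟨F, hF, hcard⟩ := Nat.sInf_mem hne
  exact ⟨F, hF, hcard.trans h⟩

theorem isPDS_univ (k : ℕ) : H.IsPDS k Set.univ :=
  ⟨0, Set.univ_union _⟩

theorem le_pdn_of_forall_isPDS [Fintype V] {k n : ℕ}
    (h : ∀ D : Finset V, H.IsPDS k ↑D → n ≤ D.card) : n ≤ H.pdn k := by
  have hne : {t | ∃ D : Finset V, H.IsPDS k ↑D ∧ D.card ≤ t}.Nonempty :=
    ⟨_, Finset.univ, by simpa using H.isPDS_univ k, le_rfl⟩
  refine le_csInf hne ?_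
  rintro t ⟨D, hD, hcard⟩
  exact (h D hD).trans hcard

end Hypergraph'

theorem Finset.card_le_card_of_meets_pairwiseDisjoint {ι α : Type*} [Fintype ι]
    {A : ι → Finset α} (hA : Pairwise fun i j => Disjoint (A i) (A j)) {D : Finset α}
    (hD : ∀ i, ∃ v ∈ D, v ∈ A i) : Fintype.card ι ≤ D.card := by
  choose f hfD hfA using hD
  have hinj : Function.Injective f := fun i j hij => by
    by_contra hne
    exact Finset.disjoint_left.mp (hA hne) (hfA i) (hij ▸ hfA j)
  exact Finset.card_le_card_of_injOn f (fun i _ => hfD i) hinj.injOn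

namespace Squid

open Hypergraph'

variable {V : Type*} [Fintype V] [DecidableEq V] {H : Hypergraph' V} {d k r : ℕ}
  {x : Fin d → ℕ} (sq : Squid H d k r x) (i : Fin d)

theorem weak_nonempty : (sq.weak i).Nonempty := by
  rw [← Finset.card_pos, sq.weak_card i]
  have := sq.x_pos i
  omega

theorem mem_spine_of_adj_weak {u w : V} (hw : w ∈ sq.weak i) (hadj : H.Adj u w) :
    u ∈ sq.strong i ∪ sq.weak i := by
  obtain ⟨-, e, he, hu, hwe⟩ := hadj
  exact (sq.spineEdges_strong i e (sq.weak_edge_in_spine e he i ⟨w, hw, hwe⟩)).2 hu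

theorem adj_of_mem_strong_of_mem_weak {v w : V} (hv : v ∈ sq.strong i) (hw : w ∈ sq.weak i) :
    H.Adj v w := by
  obtain ⟨e, he, hwe⟩ := Finset.mem_biUnion.mp (sq.spineEdges_cover i hw)
  refine ⟨?_, e, sq.spineEdges_sub i he, (sq.spineEdges_strong i e he).1 hv, hwe⟩
  rintro rfl
  exact Finset.disjoint_left.mp (sq.strong_weak_disj i) hv hw

theorem card_le_of_weak_subset_biUnion {F : Finset (Finset V)} (hF : F ⊆ H.edges)
    (hcov : sq.weak i ⊆ F.biUnion id) : k + 1 ≤ F.card := by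
  have hcov' : sq.weak i ⊆ (F ∩ sq.spineEdges i).biUnion id := by
    intro w hw
    obtain ⟨e, heF, hwe⟩ := Finset.mem_biUnion.mp (hcov hw)
    have hspine := sq.weak_edge_in_spine e (hF heF) i ⟨w, hw, hwe⟩
    exact Finset.mem_biUnion.mpr ⟨e, Finset.mem_inter.mpr ⟨heF, hspine⟩, hwe⟩
  have heq : F ∩ sq.spineEdges i = sq.spineEdges i := by
    by_contra hne
    exact sq.no_proper_cover i _ (Finset.inter_subset_right.ssubset_of_ne hne) hcov'
  calc k + 1 = (F ∩ sq.spineEdges i).card := by rw [heq, sq.spineEdges_card]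
    _ ≤ F.card := Finset.card_le_card Finset.inter_subset_left

theorem lt_wdeg_of_mem_strong {S : Set V} (hS : ∀ w ∈ sq.weak i, w ∉ S) {v : V}
    (hv : v ∈ sq.strong i) : k < H.wdeg v S := by
  by_contra! hle
  obtain ⟨F, ⟨hFH, -, hFcov⟩, hcard⟩ := H.exists_covers_card_le_of_wdeg_le hle
  have hcov : sq.weak i ⊆ F.biUnion id := fun w hw => by
    obtain ⟨e, he, hwe⟩ := hFcov w (sq.adj_of_mem_strong_of_mem_weak i hv hw) (hS w hw)
    exact Finset.mem_biUnion.mpr ⟨e, he, hwe⟩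
  have := sq.card_le_of_weak_subset_biUnion i hFH hcov
  omega

theorem weak_not_mem_iterate_step {D : Set V} (hD : ∀ v ∈ D, v ∉ sq.strong i ∪ sq.weak i)
    (t : ℕ) : ∀ w ∈ sq.weak i, w ∉ (H.step k)^[t] (H.closedNbhd D) := by
  induction t with
  | zero =>
    rintro w hw (hwD | ⟨v, hvD, hadj⟩)
    · exact hD w hwD (Finset.mem_union_right _ hw)
    · exact hD v hvD (sq.mem_spine_of_adj_weak i hw hadj)
  | succ t ih =>
    rw [Function.iterate_succ_apply']
    rintro w hw (hwS | ⟨v, hvS, hadj, hforce⟩)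
    · exact ih w hw hwS
    · have hv : v ∈ sq.strong i := by
        rcases Finset.mem_union.mp (sq.mem_spine_of_adj_weak i hw hadj) with hv | hv
        · exact hv
        · exact absurd hvS (ih v hv)
      exact (sq.lt_wdeg_of_mem_strong i ih hv).not_ge hforce

theorem exists_mem_spine_of_isPDS {D : Set V} (hD : H.IsPDS k D) :
    ∃ v ∈ D, v ∈ sq.strong i ∪ sq.weak i := by
  by_contra! hmiss
  obtain ⟨t, ht⟩ := hD
  obtain ⟨w, hw⟩ := sq.weak_nonempty i
  exact sq.weak_not_mem_iterate_step i hmiss t w hw (ht ▸ Set.mem_univ w)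

end Squid

open Hypergraph' in
theorem squid_pdn_lower_general {V : Type*} [Fintype V] [DecidableEq V] (H : Hypergraph' V)
    (d k r : ℕ) (x : Fin d → ℕ)
    (sq : Squid H d k r x) :
    (∀ D : Finset V, H.IsPDS k ↑D → ∀ i : Fin d, ∃ v ∈ D, v ∈ sq.strong i ∪ sq.weak i) ∧
    d ≤ H.pdn k := by
  refine ⟨fun D hD i => sq.exists_mem_spine_of_isPDS i hD,
    H.le_pdn_of_forall_isPDS fun D hD => ?_⟩
  simpa using Finset.card_le_card_of_meets_pairwiseDisjoint
    (fun i j hij => sq.spine_disj i j hij) (sq.exists_mem_spine_of_isPDS · hD)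

open Hypergraph' in
/-- In a `(d,k,r,x)`-squid, every `k`-power dominating set contains a
vertex of each spine; hence `γ_p^k(H) ≥ d`. -/
theorem squid_pdn_lower {V : Type*} [Fintype V] [DecidableEq V] (H : Hypergraph' V)
    (d k r : ℕ) (x : Fin d → ℕ) (hd : 1 ≤ d) (hk : 1 ≤ k) (hr : 2 ≤ r)
    (sq : Squid H d k r x) :
    (∀ D : Finset V, H.IsPDS k ↑D → ∀ i : Fin d, ∃ v ∈ D, v ∈ sq.strong i ∪ sq.weak i) ∧
    d ≤ H.pdn k :=
  squid_pdn_lower_general H d k r x sq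
end

section
/- Let H be an r-uniform hypergraph and let H' be the squid hypergraph of H. Then γ_p^k(H') = |V(H)|. -/
/-- A hypergraph on vertex type `V`, given by its finite set of (finite) edges. -/
structure FinHypergraph (V : Type*) where
  edges : Finset (Finset V)

namespace FinHypergraph

variable {V : Type*}

/-- Two vertices are adjacent iff they are distinct and share an edge. -/
def Adj (H : FinHypergraph V) (u v : V) : Prop :=
  u ≠ v ∧ ∃ e ∈ H.edges, u ∈ e ∧ v ∈ e

/-- The underlying adjacency (simple) graph of a hypergraph. -/
def graph (H : FinHypergraph V) : SimpleGraph V where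
  Adj := H.Adj
  symm := by
    refine ⟨?_⟩
    rintro u v ⟨hne, e, he, hu, hv⟩
    exact ⟨hne.symm, e, he, hv, hu⟩
  loopless := by
    refine ⟨?_⟩
    rintro u ⟨hne, -⟩
    exact hne rfl

/-- Closed neighborhood of a set of vertices. -/
def closedNbhd (H : FinHypergraph V) (S : Set V) : Set V :=
  S ∪ {u | ∃ v ∈ S, H.Adj v u}

/-- `F` is a set of edges through `v` covering all neighbors of `v` outside `S`. -/
def Covers (H : FinHypergraph V) (v : V) (S : Set V) (F : Finset (Finset V)) : Prop :=
  F ⊆ H.edges ∧ (∀ e ∈ F, v ∈ e) ∧ ∀ u, H.Adj v u → u ∉ S → ∃ e ∈ F, u ∈ e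

/-- The white degree of `v` with respect to the blue set `S`: the minimum number of
edges containing `v` that cover all neighbors of `v` outside `S`. -/
noncomputable def wdeg (H : FinHypergraph V) (v : V) (S : Set V) : ℕ :=
  sInf {t | ∃ F, H.Covers v S F ∧ F.card ≤ t}

/-- One step of the `k`-forcing propagation: every blue vertex whose white
neighbors can be covered by at most `k` incident edges forces its neighbors blue. -/
def step (H : FinHypergraph V) (k : ℕ) (S : Set V) : Set V :=
  S ∪ {u | ∃ v ∈ S, H.Adj v u ∧ H.wdeg v S ≤ k}

/-- `D` is a `k`-power dominating set if iterating the propagation from `N[D]`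
colors every vertex blue. -/
def IsPDS (H : FinHypergraph V) (k : ℕ) (D : Set V) : Prop :=
  ∃ t : ℕ, (H.step k)^[t] (H.closedNbhd D) = Set.univ

/-- The `k`-power domination number. -/
noncomputable def pdn (H : FinHypergraph V) (k : ℕ) : ℕ :=
  sInf {t | ∃ D : Finset V, H.IsPDS k ↑D ∧ D.card ≤ t}

/-- A dominating set. -/
def Dominating (H : FinHypergraph V) (S : Set V) : Prop :=
  H.closedNbhd S = Set.univ

/-- The domination number. -/
noncomputable def gamma (H : FinHypergraph V) : ℕ :=
  sInf {t | ∃ D : Finset V, H.Dominating ↑D ∧ D.card ≤ t}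

/-- An `r`-uniform hypergraph. -/
def Uniform (H : FinHypergraph V) (r : ℕ) : Prop :=
  ∀ e ∈ H.edges, e.card = r

/-- Connectivity of the underlying adjacency graph. -/
def Connected (H : FinHypergraph V) : Prop := H.graph.Connected

/-- No isolated vertices: every vertex lies in some edge. -/
def NoIsolated (H : FinHypergraph V) : Prop :=
  ∀ v : V, ∃ e ∈ H.edges, v ∈ e

/-- External private neighbors of `v` with respect to `D`. -/
def epn (H : FinHypergraph V) (v : V) (D : Set V) : Set V :=
  {u | u ∉ D ∧ H.Adj v u ∧ ∀ w ∈ D, w ≠ v → ¬ H.Adj w u}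

/-- Number of connected components of the subhypergraph induced on `D`
(with respect to adjacency within `D`). -/
noncomputable def numComponents (H : FinHypergraph V) (D : Set V) : ℕ :=
  Nat.card (SimpleGraph.ConnectedComponent (SimpleGraph.induce D H.graph))

end FinHypergraph

variable {V : Type*} [Fintype V] [DecidableEq V]

/-- The vertex type of the squid hypergraph of a hypergraph on `V`: the original
vertices, the `k+1` pendant vertices `v_1, …, v_{k+1}` of each `v`, and the `r-2`
shared leg vertices `v'_1, …, v'_{r-2}` of each `v`. -/
abbrev SquidVert (V : Type*) (k r : ℕ) : Type _ :=
  V ⊕ (V × Fin (k + 1)) ⊕ (V × Fin (r - 2))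

/-- The leg edge `e_{v,i} = {v, v'_1, …, v'_{r-2}, v_i}`. -/
def legEdge (k r : ℕ) (v : V) (i : Fin (k + 1)) : Finset (SquidVert V k r) :=
  insert (Sum.inl v) (insert (Sum.inr (Sum.inl (v, i)))
    ((Finset.univ : Finset (Fin (r - 2))).image fun j => Sum.inr (Sum.inr (v, j))))

/-- The squid hypergraph of `H`: the edges of `H` together with the `k+1` leg edges
attached to every vertex `v` of `H`. -/
def squidOf (H : FinHypergraph V) (k r : ℕ) : FinHypergraph (SquidVert V k r) where
  edges :=
    H.edges.image (fun e => e.image Sum.inl) ∪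
      (Finset.univ : Finset (V × Fin (k + 1))).image (fun p => legEdge k r p.1 p.2)

/-!
Every vertex of the squid hypergraph is an original vertex or lies on a leg, so the original
vertices dominate it and `γ_p^k(H') ≤ |V(H)|`. Conversely, the `k + 1` pendant vertices of a
vertex `v` each lie in a single leg edge, so a blue vertex of the gadget of `v` cannot force
while any of them is white. Hence if a set misses the gadget of `v`, the pendants of `v` stay
white forever, and a `k`-power dominating set meets each of the `|V(H)|` disjoint gadgets.
-/

namespace FinHypergraph

variable {V : Type*} {H : FinHypergraph V} {k : ℕ}

theorem le_wdeg {v : V} {S : Set V} {n : ℕ} (h : ∀ F, H.Covers v S F → n ≤ F.card) :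
    n ≤ H.wdeg v S := by
  classical
  have hcover : H.Covers v S {e ∈ H.edges | v ∈ e} :=
    ⟨Finset.filter_subset _ _, fun e he => (Finset.mem_filter.1 he).2,
      fun u ⟨_, e, he, hve, hue⟩ _ => ⟨e, Finset.mem_filter.2 ⟨he, hve⟩, hue⟩⟩
  obtain ⟨F, hF, hcard⟩ := Nat.sInf_mem
    (show {t | ∃ F, H.Covers v S F ∧ F.card ≤ t}.Nonempty from ⟨_, _, hcover, le_rfl⟩)
  exact (h F hF).trans hcard

/-- Edges that each contain a white neighbour of `v` lying in no other edge must all be used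
by any cover. -/
theorem card_le_wdeg {v : V} {S : Set V} {P : Finset (Finset V)}
    (hP : ∀ e ∈ P, ∃ u, H.Adj v u ∧ u ∉ S ∧ ∀ e' ∈ H.edges, u ∈ e' → e' = e) :
    P.card ≤ H.wdeg v S :=
  le_wdeg fun F ⟨hFH, _, hF⟩ => Finset.card_le_card fun e he => by
    obtain ⟨u, hvu, huS, huniq⟩ := hP e he
    obtain ⟨e', he'F, hue'⟩ := hF u hvu huS
    rwa [← huniq e' (hFH he'F) hue']

theorem Dominating.isPDS {D : Set V} (hD : H.Dominating D) : H.IsPDS k D :=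
  ⟨0, hD⟩

theorem not_isPDS_of_invariant {D : Set V} (P : Set (Set V)) (hD : H.closedNbhd D ∈ P)
    (hstep : Set.MapsTo (H.step k) P P) (huniv : Set.univ ∉ P) : ¬ H.IsPDS k D := by
  rintro ⟨t, ht⟩
  exact huniv (ht ▸ hstep.iterate t hD)

theorem pdn_le_card {D : Finset V} (hD : H.IsPDS k D) : H.pdn k ≤ D.card :=
  Nat.sInf_le ⟨D, hD, le_rfl⟩

theorem le_pdn {n : ℕ} {D₀ : Finset V} (hD₀ : H.IsPDS k D₀)
    (h : ∀ D : Finset V, H.IsPDS k D → n ≤ D.card) : n ≤ H.pdn k := by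
  obtain ⟨D, hD, hcard⟩ := Nat.sInf_mem
    (show {t | ∃ D : Finset V, H.IsPDS k D ∧ D.card ≤ t}.Nonempty from
      ⟨_, D₀, hD₀, le_rfl⟩)
  exact (h D hD).trans hcard

end FinHypergraph

open FinHypergraph

namespace SquidVert

variable {k r : ℕ}

/-- The vertex of `H` whose gadget contains the given vertex. -/
def base : SquidVert V k r → V := Sum.elim id (Sum.elim Prod.fst Prod.fst)

/-- The pendant vertex `v_i`. -/
abbrev pendant (v : V) (i : Fin (k + 1)) : SquidVert V k r := .inr (.inl (v, i))

end SquidVert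

open SquidVert

section LegEdge

omit [Fintype V]

variable {k r : ℕ}

theorem mem_legEdge {v : V} {i : Fin (k + 1)} {x : SquidVert V k r} :
    x ∈ legEdge k r v i ↔ x = .inl v ∨ x = pendant v i ∨ ∃ j, x = .inr (.inr (v, j)) := by
  simp [legEdge, eq_comm]

theorem legEdge_injective (v : V) :
    Function.Injective (legEdge (V := V) k r v) := by
  intro i j hij
  have : (pendant v i : SquidVert V k r) ∈ legEdge k r v j := hij ▸ mem_legEdge.2 (by simp)
  simpa [mem_legEdge] using this

theorem base_of_mem_legEdge {v : V} {i : Fin (k + 1)} {x : SquidVert V k r}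
    (hx : x ∈ legEdge k r v i) : base x = v := by
  rcases mem_legEdge.1 hx with rfl | rfl | ⟨j, rfl⟩ <;> rfl

end LegEdge

section Squid

variable {H : FinHypergraph V} {k r : ℕ}

theorem legEdge_mem_squidOf_edges (v : V) (i : Fin (k + 1)) :
    legEdge k r v i ∈ (squidOf H k r).edges := by
  simp [squidOf]

theorem eq_legEdge_of_pendant_mem {e : Finset (SquidVert V k r)} {v : V} {i : Fin (k + 1)}
    (he : e ∈ (squidOf H k r).edges) (hi : pendant v i ∈ e) : e = legEdge k r v i := by
  simp only [squidOf, Finset.mem_union, Finset.mem_image] at he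
  rcases he with ⟨e₀, -, rfl⟩ | ⟨⟨w, j⟩, -, rfl⟩
  · simp at hi
  · obtain ⟨rfl, rfl⟩ : w = v ∧ j = i := by simpa [mem_legEdge, eq_comm] using hi
    rfl

theorem squidOf_adj_pendant {v : V} {i : Fin (k + 1)} {w : SquidVert V k r}
    (hw : w ∈ legEdge k r v i) (hne : w ≠ pendant v i) (j : Fin (k + 1)) :
    (squidOf H k r).Adj w (pendant v j) := by
  have hwj : w ∈ legEdge k r v j := by
    rcases mem_legEdge.1 hw with rfl | rfl | ⟨j', rfl⟩
    · simp [mem_legEdge]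
    · exact absurd rfl hne
    · simp [mem_legEdge]
  refine ⟨?_, _, legEdge_mem_squidOf_edges v j, hwj, mem_legEdge.2 (by simp)⟩
  rcases mem_legEdge.1 hw with rfl | rfl | ⟨j', rfl⟩ <;> simp_all

theorem squidOf_dominating_inl :
    (squidOf H k r).Dominating ↑(Finset.univ.image (Sum.inl : V → SquidVert V k r)) := by
  refine Set.eq_univ_of_forall fun x => ?_
  rcases x with v | ⟨v, i⟩ | ⟨v, j⟩
  · exact Or.inl (by simp)
  · exact Or.inr ⟨.inl v, by simp,
      squidOf_adj_pendant (i := i) (mem_legEdge.2 (by simp)) (by simp) i⟩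
  · exact Or.inr ⟨.inl v, by simp, by simp, _, legEdge_mem_squidOf_edges v 0,
      mem_legEdge.2 (by simp), mem_legEdge.2 (by simp)⟩

/-- Only a gadget vertex of `v` other than a pendant can force a pendant of `v`, and it is
adjacent to all `k + 1` pendants, each lying in its own leg edge only. -/
theorem squidOf_step_pendants_white {v : V} {S : Set (SquidVert V k r)}
    (hS : ∀ i, pendant v i ∉ S) (i : Fin (k + 1)) :
    pendant v i ∉ (squidOf H k r).step k S := by
  rintro (hi | ⟨w, hwS, ⟨hne, e, he, hwe, hie⟩, hwdeg⟩)
  · exact hS i hi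
  rw [eq_legEdge_of_pendant_mem he hie] at hwe
  have hlegs : (Finset.univ.image (legEdge k r v)).card ≤ (squidOf H k r).wdeg w S := by
    refine card_le_wdeg fun e he' => ?_
    obtain ⟨j, -, rfl⟩ := Finset.mem_image.1 he'
    exact ⟨pendant v j, squidOf_adj_pendant hwe hne j, hS j,
      fun e' he' hje' => eq_legEdge_of_pendant_mem he' hje'⟩
  rw [Finset.card_image_of_injective _ (legEdge_injective v), Finset.card_univ,
    Fintype.card_fin] at hlegs
  omega

theorem squidOf_closedNbhd_pendants_white {v : V} {D : Set (SquidVert V k r)}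
    (hD : ∀ x ∈ D, base x ≠ v) (i : Fin (k + 1)) :
    pendant v i ∉ (squidOf H k r).closedNbhd D := by
  rintro (hi | ⟨w, hwD, -, e, he, hwe, hie⟩)
  · exact hD _ hi rfl
  · rw [eq_legEdge_of_pendant_mem he hie] at hwe
    exact hD w hwD (base_of_mem_legEdge hwe)

theorem squidOf_isPDS_surjOn_base {D : Set (SquidVert V k r)}
    (hD : (squidOf H k r).IsPDS k D) : Set.SurjOn base D Set.univ := by
  intro v _
  by_contra hv
  refine not_isPDS_of_invariant {S | ∀ i, pendant v i ∉ S}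
    (squidOf_closedNbhd_pendants_white fun x hx hxv => hv ⟨x, hx, hxv⟩)
    (fun S hS => squidOf_step_pendants_white hS) (fun h => h 0 trivial) hD

end Squid

theorem squidOf_pdn_general (H : FinHypergraph V) (k r : ℕ) :
    (squidOf H k r).pdn k = Fintype.card V := by
  have hV : (squidOf H k r).IsPDS k ↑(Finset.univ.image (Sum.inl : V → SquidVert V k r)) :=
    squidOf_dominating_inl.isPDS
  refine le_antisymm ?_ (le_pdn hV fun D hD => ?_)
  · simpa [Finset.card_image_of_injective _ Sum.inl_injective] using pdn_le_card hV
  · rw [← Finset.card_univ]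
    exact Finset.card_le_card_of_surjOn base (by simpa using squidOf_isPDS_surjOn_base hD)

open FinHypergraph in
/-- If `H` is an `r`-uniform hypergraph and `H'` its squid hypergraph,
then `γ_p^k(H') = |V(H)|`. -/
theorem squidOf_pdn (H : FinHypergraph V) (k r : ℕ) (hr : 2 ≤ r)
    (hunif : H.Uniform r) :
    (squidOf H k r).pdn k = Fintype.card V :=
  squidOf_pdn_general H k r
end

section
/- For k ≥ 1 and the 3-edge hypergraph H with vertex set V_1 ∪ V_2 ∪ V_3 ∪ {v_{12}, v_{13}, v_{23}} (|V_1| = ⌊(r−1)/2⌋, |V_2| = |V_3| = ⌈(r−1)/2⌉, r ≥ 5), V'_2 ⊆ V_2 of size ⌊(r−1)/2⌋, and edges e_1 = V_1 ∪ V_2 ∪ {v_{12}}, e_2 = V_1 ∪ V_3 ∪ {v_{13}}, e_3 = V'_2 ∪ V_3 ∪ {v_{23}}, the singleton {u} for any u ∈ V_1 is a k-power dominating set, so γ_p^k(H) = 1. -/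
/-- A hypergraph on vertex type `V`, given by its finite set of (finite) edges. -/
structure FinsetHypergraph (V : Type*) where
  edges : Finset (Finset V)

namespace FinsetHypergraph

variable {V : Type*}

/-- Two vertices are adjacent iff they are distinct and share an edge. -/
def Adj (H : FinsetHypergraph V) (u v : V) : Prop :=
  u ≠ v ∧ ∃ e ∈ H.edges, u ∈ e ∧ v ∈ e

/-- The underlying adjacency (simple) graph of a hypergraph. -/
def graph (H : FinsetHypergraph V) : SimpleGraph V where
  Adj := H.Adj
  symm := by
    constructor
    rintro u v ⟨hne, e, he, hu, hv⟩
    exact ⟨hne.symm, e, he, hv, hu⟩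
  loopless := by
    constructor
    rintro u ⟨hne, -⟩
    exact hne rfl

/-- Closed neighborhood of a set of vertices. -/
def closedNbhd (H : FinsetHypergraph V) (S : Set V) : Set V :=
  S ∪ {u | ∃ v ∈ S, H.Adj v u}

/-- `F` is a set of edges through `v` covering all neighbors of `v` outside `S`. -/
def Covers (H : FinsetHypergraph V) (v : V) (S : Set V) (F : Finset (Finset V)) : Prop :=
  F ⊆ H.edges ∧ (∀ e ∈ F, v ∈ e) ∧ ∀ u, H.Adj v u → u ∉ S → ∃ e ∈ F, u ∈ e

/-- The white degree of `v` with respect to the blue set `S`: the minimum number of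
edges containing `v` that cover all neighbors of `v` outside `S`. -/
noncomputable def wdeg (H : FinsetHypergraph V) (v : V) (S : Set V) : ℕ :=
  sInf {t | ∃ F, H.Covers v S F ∧ F.card ≤ t}

/-- One step of the `k`-forcing propagation: every blue vertex whose white
neighbors can be covered by at most `k` incident edges forces its neighbors blue. -/
def step (H : FinsetHypergraph V) (k : ℕ) (S : Set V) : Set V :=
  S ∪ {u | ∃ v ∈ S, H.Adj v u ∧ H.wdeg v S ≤ k}

/-- `D` is a `k`-power dominating set if iterating the propagation from `N[D]`
colors every vertex blue. -/
def IsPDS (H : FinsetHypergraph V) (k : ℕ) (D : Set V) : Prop :=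
  ∃ t : ℕ, (H.step k)^[t] (H.closedNbhd D) = Set.univ

/-- The `k`-power domination number. -/
noncomputable def pdn (H : FinsetHypergraph V) (k : ℕ) : ℕ :=
  sInf {t | ∃ D : Finset V, H.IsPDS k ↑D ∧ D.card ≤ t}

/-- A dominating set. -/
def Dominating (H : FinsetHypergraph V) (S : Set V) : Prop :=
  H.closedNbhd S = Set.univ

/-- The domination number. -/
noncomputable def gamma (H : FinsetHypergraph V) : ℕ :=
  sInf {t | ∃ D : Finset V, H.Dominating ↑D ∧ D.card ≤ t}

/-- An `r`-uniform hypergraph. -/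
def Uniform (H : FinsetHypergraph V) (r : ℕ) : Prop :=
  ∀ e ∈ H.edges, e.card = r

/-- Connectivity of the underlying adjacency graph. -/
def Connected (H : FinsetHypergraph V) : Prop := H.graph.Connected

/-- No isolated vertices: every vertex lies in some edge. -/
def NoIsolated (H : FinsetHypergraph V) : Prop :=
  ∀ v : V, ∃ e ∈ H.edges, v ∈ e

/-- External private neighbors of `v` with respect to `D`. -/
def epn (H : FinsetHypergraph V) (v : V) (D : Set V) : Set V :=
  {u | u ∉ D ∧ H.Adj v u ∧ ∀ w ∈ D, w ≠ v → ¬ H.Adj w u}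

/-- Number of connected components of the subhypergraph induced on `D`
(with respect to adjacency within `D`). -/
noncomputable def numComponents (H : FinsetHypergraph V) (D : Set V) : ℕ :=
  Nat.card (SimpleGraph.ConnectedComponent (SimpleGraph.induce D H.graph))

end FinsetHypergraph

/-! Every vertex other than `v₂₃` lies in `e₁` or `e₂`, both of which contain `u ∈ V₁`, so `N[u]`
misses only `v₂₃`. A vertex of `V₃` is then blue and its only white neighbour `v₂₃` is covered by
the single edge `e₃`, so it forces `v₂₃` in one step. -/

namespace FinsetHypergraph

variable {V : Type*} (H : FinsetHypergraph V)

theorem mem_closedNbhd_singleton_of_mem_edge {e : Finset V} {u y : V} (he : e ∈ H.edges)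
    (hu : u ∈ e) (hy : y ∈ e) : y ∈ H.closedNbhd {u} := by
  by_cases hyu : y = u
  · exact Or.inl hyu
  · exact Or.inr ⟨u, rfl, Ne.symm hyu, e, he, hu, hy⟩

theorem wdeg_le_one {e : Finset V} {v : V} {S : Set V} (he : e ∈ H.edges) (hv : v ∈ e)
    (hwhite : ∀ y, H.Adj v y → y ∉ S → y ∈ e) : H.wdeg v S ≤ 1 :=
  Nat.sInf_le ⟨{e}, ⟨Finset.singleton_subset_iff.mpr he, by simpa using hv,
    fun y hvy hyS => ⟨e, Finset.mem_singleton_self e, hwhite y hvy hyS⟩⟩,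
    (Finset.card_singleton e).le⟩

theorem isPDS_of_forall_ne_mem_closedNbhd {k : ℕ} {D : Set V} {e : Finset V} {v x : V}
    (hk : 1 ≤ k) (hD : ∀ y, y ≠ x → y ∈ H.closedNbhd D) (he : e ∈ H.edges) (hv : v ∈ e)
    (hx : x ∈ e) (hvx : v ≠ x) : H.IsPDS k D := by
  have hwhite : ∀ y, H.Adj v y → y ∉ H.closedNbhd D → y ∈ e := fun y _ hy => by
    rwa [not_not.mp (mt (hD y) hy)]
  have hforce : H.wdeg v (H.closedNbhd D) ≤ k := (H.wdeg_le_one he hv hwhite).trans hk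
  refine ⟨1, Set.eq_univ_of_forall fun y => ?_⟩
  by_cases hyx : y = x
  · subst hyx
    exact Or.inr ⟨v, hD v hvx, ⟨hvx, e, he, hv, hx⟩, hforce⟩
  · exact Or.inl (hD y hyx)

theorem not_isPDS_empty [Nonempty V] (k : ℕ) : ¬ H.IsPDS k ∅ := by
  rintro ⟨t, ht⟩
  have hN : H.closedNbhd ∅ = ∅ := by simp [closedNbhd]
  have hstep : H.step k ∅ = ∅ := by simp [step]
  rw [hN, Function.iterate_fixed hstep t] at ht
  exact Set.empty_ne_univ ht

theorem pdn_eq_one_of_isPDS_singleton {k : ℕ} {u : V} (h : H.IsPDS k {u}) : H.pdn k = 1 := by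
  have : Nonempty V := ⟨u⟩
  have hone : 1 ∈ {t | ∃ D : Finset V, H.IsPDS k ↑D ∧ D.card ≤ t} :=
    ⟨{u}, by rwa [Finset.coe_singleton], (Finset.card_singleton u).le⟩
  refine le_antisymm (Nat.sInf_le hone) (Nat.one_le_iff_ne_zero.mpr fun h0 => ?_)
  obtain ⟨D, hD, hcard⟩ :=
    (Nat.sInf_eq_zero.mp h0).resolve_right (Set.nonempty_of_mem hone).ne_empty
  rw [Finset.card_eq_zero.mp (Nat.le_zero.mp hcard), Finset.coe_empty] at hD
  exact H.not_isPDS_empty k hD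

end FinsetHypergraph

open FinsetHypergraph in
theorem three_edge_pdn_one_general {V : Type*} [Fintype V] [DecidableEq V]
    (H : FinsetHypergraph V) (r k : ℕ) (hr : 5 ≤ r) (hk : 1 ≤ k)
    (V1 V2 V3 V2' : Finset V) (v12 v13 v23 : V)
    (hV1 : V1.card = (r - 1) / 2) (hV3 : V3.card = r / 2)
    (hdisj : List.Pairwise Disjoint [V1, V2, V3, ({v12} : Finset V), {v13}, {v23}])
    (huniv : V1 ∪ V2 ∪ V3 ∪ {v12, v13, v23} = Finset.univ)
    (hedges : H.edges = {V1 ∪ V2 ∪ {v12}, V1 ∪ V3 ∪ {v13}, V2' ∪ V3 ∪ {v23}}) :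
    (∀ u ∈ V1, H.IsPDS k {u}) ∧ H.pdn k = 1 := by
  obtain ⟨u₀, hu₀⟩ : V1.Nonempty := by rw [← Finset.card_pos, hV1]; omega
  obtain ⟨w, hw⟩ : V3.Nonempty := by rw [← Finset.card_pos, hV3]; omega
  have hv23 : v23 ∉ V3 := fun h =>
    Finset.disjoint_left.mp (by simp_all [List.pairwise_cons]) h (Finset.mem_singleton_self v23)
  have hpds : ∀ u ∈ V1, H.IsPDS k {u} := by
    intro u hu
    refine H.isPDS_of_forall_ne_mem_closedNbhd (e := V2' ∪ V3 ∪ {v23}) hk (fun y hy => ?_)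
      (by simp [hedges]) (by simp [hw]) (by simp) (ne_of_mem_of_not_mem hw hv23)
    have hy' : y ∈ V1 ∪ V2 ∪ {v12} ∨ y ∈ V1 ∪ V3 ∪ {v13} := by
      have := huniv ▸ Finset.mem_univ y
      simp only [Finset.mem_union, Finset.mem_insert, Finset.mem_singleton] at this ⊢
      tauto
    rcases hy' with hy' | hy' <;>
      exact H.mem_closedNbhd_singleton_of_mem_edge (by simp [hedges]) (by simp [hu]) hy'
  exact ⟨hpds, H.pdn_eq_one_of_isPDS_singleton (hpds u₀ hu₀)⟩

open FinsetHypergraph in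
/-- In the 3-edge hypergraph with `|V₁| = ⌊(r−1)/2⌋`,
`|V₂| = |V₃| = ⌈(r−1)/2⌉`, `V₂' ⊆ V₂` of size `⌊(r−1)/2⌋`, and edges
`e₁ = V₁ ∪ V₂ ∪ {v₁₂}`, `e₂ = V₁ ∪ V₃ ∪ {v₁₃}`, `e₃ = V₂' ∪ V₃ ∪ {v₂₃}`,
any singleton `{u}` with `u ∈ V₁` is a `k`-power dominating set (`k ≥ 1`),
so `γ_p^k(H) = 1`. -/
theorem three_edge_pdn_one {V : Type*} [Fintype V] [DecidableEq V]
    (H : FinsetHypergraph V) (r k : ℕ) (hr : 5 ≤ r) (hk : 1 ≤ k)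
    (V1 V2 V3 V2' : Finset V) (v12 v13 v23 : V)
    (hV1 : V1.card = (r - 1) / 2) (hV2 : V2.card = r / 2) (hV3 : V3.card = r / 2)
    (hV2' : V2' ⊆ V2) (hV2'card : V2'.card = (r - 1) / 2)
    (hdisj : List.Pairwise Disjoint [V1, V2, V3, ({v12} : Finset V), {v13}, {v23}])
    (huniv : V1 ∪ V2 ∪ V3 ∪ {v12, v13, v23} = Finset.univ)
    (hedges : H.edges = {V1 ∪ V2 ∪ {v12}, V1 ∪ V3 ∪ {v13}, V2' ∪ V3 ∪ {v23}}) :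
    (∀ u ∈ V1, H.IsPDS k {u}) ∧ H.pdn k = 1 :=
  three_edge_pdn_one_general H r k hr hk V1 V2 V3 V2' v12 v13 v23 hV1 hV3 hdisj huniv hedges
end
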